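/- arXiv:2211.10741 — 2 statements merged into one kernel-verified Lean document; each statement's English description precedes it below -/
import Mathlib

section
/- Let a > 1 and d ≥ 1 be integers and R a degree-d polynomial with integer coefficients, positive leading coefficient b_d, mapping ℕ to ℕ. Let p be a prime coprime to a, N a positive integer with h_a(p) ≤ N (where h_a(p) is the order of a mod p). Then #{1 ≤ n ≤ N : a^{R(n)} ≡ 1 (mod p)} ≤ C(R) · N / h_a(p)^{1/d}, where C(R) > 0 depends only on R (assuming the polynomial root-counting bound ρ(f, m) ≤ c d b_d^{1/d} m^{1-1/d}). -/
/-!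
By the definition of the order, `a ^ R(n) ≡ 1 (mod p)` exactly when `h = ord_p(a)` divides
`R(n)`. Divisibility of `R(n)` by `h` is `h`-periodic in `n`, so `[1, N]` is covered by at most
`N / h + 1 ≤ 2N / h` blocks of length `h`, each containing
`#{n ∈ [1, h] : h ∣ R(n)} ≪ h ^ (1 - 1/d)` solutions.
-/

open Finset Function Polynomial

namespace Nat

theorem count_mul_of_periodic {p : ℕ → Prop} [DecidablePred p] {h : ℕ} (hp : Periodic p h)
    (k : ℕ) : count p (k * h) = k * count p h := by
  induction k with
  | zero => simp
  | succ k ih =>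
    have hshift : count (fun j => p (k * h + j)) h = count p h := by
      have hkh : ∀ j, p (j + k * h) = p j := hp.nat_mul k
      simp_rw [add_comm (k * h), hkh]
    rw [succ_mul, count_add, ih, hshift, succ_mul]

theorem card_filter_Icc_le_of_periodic {p : ℕ → Prop} [DecidablePred p] {h : ℕ}
    (hp : Periodic p h) (hh : 0 < h) (N : ℕ) :
    #{n ∈ Icc 1 N | p n} ≤ (N / h + 1) * #{n ∈ Icc 1 h | p n} := by
  have hcover : Icc 1 N ⊆ range ((N / h + 1) * h) := fun n hn => by
    simp only [mem_Icc, mem_range] at hn ⊢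
    have := lt_div_mul_add (a := N) hh
    linarith [hn.2]
  calc #{n ∈ Icc 1 N | p n} ≤ #{n ∈ range ((N / h + 1) * h) | p n} :=
        card_le_card (filter_subset_filter _ hcover)
    _ = (N / h + 1) * count p h := by rw [← count_eq_card_filter_range, count_mul_of_periodic hp]
    _ = (N / h + 1) * #{n ∈ Icc 1 h | p n} := by
        rw [← filter_Ico_card_eq_of_periodic 1 h p hp, add_comm 1 h, Ico_add_one_right_eq_Icc]

theorem pow_modEq_one_iff_orderOf_dvd (a p k : ℕ) :
    a ^ k ≡ 1 [MOD p] ↔ orderOf (a : ZMod p) ∣ k := by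
  rw [← ZMod.natCast_eq_natCast_iff, orderOf_dvd_iff_pow_eq_one]
  push_cast
  rfl

end Nat

theorem ZMod.orderOf_natCast_pos {p a : ℕ} [NeZero p] (hcop : a.Coprime p) :
    0 < orderOf (a : ZMod p) :=
  orderOf_pos_iff.2 ((ZMod.isUnit_iff_coprime a p).2 hcop).isOfFinOrder

theorem Polynomial.periodic_dvd_eval (R : ℤ[X]) (m : ℕ) :
    Periodic (fun n : ℕ => (m : ℤ) ∣ R.eval (n : ℤ)) m := fun n => by
  have hdiff : (m : ℤ) ∣ R.eval ((n + m : ℕ) : ℤ) - R.eval (n : ℤ) :=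
    (dvd_of_eq (by push_cast; ring)).trans (sub_dvd_eval_sub _ _ R)
  exact propext (dvd_iff_dvd_of_dvd_sub hdiff)

theorem Polynomial.filter_pow_eval_modEq_one_eq_filter_orderOf_dvd {R : ℤ[X]}
    (hpos : ∀ n : ℕ, 0 < n → 0 < R.eval (n : ℤ)) (a p N : ℕ) :
    (Icc 1 N).filter (fun n : ℕ => a ^ (R.eval (n : ℤ)).toNat ≡ 1 [MOD p]) =
      (Icc 1 N).filter (fun n : ℕ => (orderOf (a : ZMod p) : ℤ) ∣ R.eval (n : ℤ)) :=
  filter_congr fun n hn => by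
    rw [Nat.pow_modEq_one_iff_orderOf_dvd, ← Int.natCast_dvd_natCast,
      Int.toNat_of_nonneg (hpos n (mem_Icc.1 hn).1).le]

theorem natCast_div_add_one_le_two_mul_div {N h : ℕ} (hh : 0 < h) (hhN : h ≤ N) :
    ((N / h : ℕ) : ℝ) + 1 ≤ 2 * N / h := by
  have hhR : (0 : ℝ) < h := by exact_mod_cast hh
  have hone : (1 : ℝ) ≤ N / h := by rw [one_le_div hhR]; exact_mod_cast hhN
  have := Nat.cast_div_le (m := N) (n := h) (α := ℝ)
  linarith [show (2 : ℝ) * N / h = N / h + N / h by ring]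

theorem stmt_14_general (d : ℕ) (hd : 1 ≤ d) (R : Polynomial ℤ)
    (hlead : 0 < R.leadingCoeff)
    (hpos : ∀ n : ℕ, 0 < n → 0 < R.eval (n : ℤ)) (c : ℝ) (hc : 0 < c)
    (hK : ∀ m : ℕ, 0 < m →
      (((Finset.Icc 1 m).filter (fun n : ℕ => (m : ℤ) ∣ R.eval (n : ℤ))).card : ℝ)
        ≤ c * d * (R.leadingCoeff : ℝ) ^ ((1 : ℝ) / d) * (m : ℝ) ^ (1 - 1 / (d : ℝ))) :
    ∃ C : ℝ, 0 < C ∧ ∀ a : ℕ, 1 < a → ∀ p : ℕ, p.Prime → Nat.Coprime p a →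
      ∀ N : ℕ, 0 < N → orderOf (a : ZMod p) ≤ N →
      (((Finset.Icc 1 N).filter
          (fun n : ℕ => a ^ (R.eval (n : ℤ)).toNat ≡ 1 [MOD p])).card : ℝ)
        ≤ C * N / (orderOf (a : ZMod p) : ℝ) ^ ((1 : ℝ) / d) := by
  have hb : (0 : ℝ) < R.leadingCoeff := by exact_mod_cast hlead
  refine ⟨2 * c * d * (R.leadingCoeff : ℝ) ^ ((1 : ℝ) / d), by positivity, ?_⟩
  intro a _ p hp hcop N _ hhN
  have : NeZero p := ⟨hp.ne_zero⟩
  set h := orderOf (a : ZMod p)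
  have hh : 0 < h := ZMod.orderOf_natCast_pos hcop.symm
  have hhR : (0 : ℝ) < h := by exact_mod_cast hh
  have hblocks := Nat.card_filter_Icc_le_of_periodic (R.periodic_dvd_eval h) hh N
  rw [R.filter_pow_eval_modEq_one_eq_filter_orderOf_dvd hpos]
  calc (((Icc 1 N).filter (fun n : ℕ => (h : ℤ) ∣ R.eval (n : ℤ))).card : ℝ)
      ≤ (((N / h : ℕ) : ℝ) + 1) *
          ((Icc 1 h).filter (fun n : ℕ => (h : ℤ) ∣ R.eval (n : ℤ))).card := by
        exact_mod_cast hblocks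
    _ ≤ (2 * N / h) *
          (c * d * (R.leadingCoeff : ℝ) ^ ((1 : ℝ) / d) * (h : ℝ) ^ (1 - 1 / (d : ℝ))) :=
        mul_le_mul (natCast_div_add_one_le_two_mul_div hh hhN) (hK h hh) (by positivity)
          (by positivity)
    _ = 2 * c * d * (R.leadingCoeff : ℝ) ^ ((1 : ℝ) / d) * N / (h : ℝ) ^ ((1 : ℝ) / d) := by
        rw [Real.rpow_sub hhR, Real.rpow_one]
        field_simp

theorem stmt_14 (d : ℕ) (hd : 1 ≤ d) (R : Polynomial ℤ)
    (hdeg : R.natDegree = d) (hlead : 0 < R.leadingCoeff)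
    (hpos : ∀ n : ℕ, 0 < n → 0 < R.eval (n : ℤ)) (c : ℝ) (hc : 0 < c)
    (hK : ∀ m : ℕ, 0 < m →
      (((Finset.Icc 1 m).filter (fun n : ℕ => (m : ℤ) ∣ R.eval (n : ℤ))).card : ℝ)
        ≤ c * d * (R.leadingCoeff : ℝ) ^ ((1 : ℝ) / d) * (m : ℝ) ^ (1 - 1 / (d : ℝ))) :
    ∃ C : ℝ, 0 < C ∧ ∀ a : ℕ, 1 < a → ∀ p : ℕ, p.Prime → Nat.Coprime p a →
      ∀ N : ℕ, 0 < N → orderOf (a : ZMod p) ≤ N →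
      (((Finset.Icc 1 N).filter
          (fun n : ℕ => a ^ (R.eval (n : ℤ)).toNat ≡ 1 [MOD p])).card : ℝ)
        ≤ C * N / (orderOf (a : ZMod p) : ℝ) ^ ((1 : ℝ) / d) :=
  stmt_14_general d hd R hlead hpos c hc hK
end

section
/- Let a > 1 and s ≥ 1 be integers, and for each n ≥ 1 let γ_n = Σ_{p prime, gcd(p,a)=1, h_a(p)=n} (ln p)^s / p. Then there is a constant C(a, s) > 0 such that Σ_{n ≤ z} γ_n ≤ C(a,s) (ln(z+2))^s for all real z ≥ 1. -/
/-!
Every prime `p` with `h_a(p) = n ≤ z` divides `P = ∏_{n ≤ z} (aⁿ - 1) ≤ a^{z²}`, so the sum is at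
most `∑_{p ∣ P} (log p)^s / p`. Choose `j` with `z ≤ 2^j`, so `j = O(log z)`, and split at `4^j`.
By Chebyshev's bound `θ(x) ≤ x log 4`, each dyadic block contributes `O(1)` to `∑ log p / p`,
so the primes `p ≤ 4^j` contribute `O(j^s)`. A prime `p > 4^j` contributes
`log p · (log p)^(s-1) / p ≤ c_s log p / √p ≤ c_s log p / 2^j`, and `∑_{p ∣ P} log p ≤ log P ≤ z² log a`,
so these primes contribute `O(1)`.
-/

open Real Finset

lemma log_pow_le_mul_sqrt (m : ℕ) {x : ℝ} (hx : 1 ≤ x) :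
    log x ^ m ≤ (2 * m + 2) ^ m * √x := by
  set ε : ℝ := (2 * m + 2)⁻¹
  have hε : 0 < ε := by positivity
  have hεm : ε * m ≤ 1 / 2 := by
    rw [mul_comm, ← div_eq_mul_inv, div_le_iff₀ (by positivity)]
    linarith
  calc log x ^ m ≤ (x ^ ε / ε) ^ m :=
        pow_le_pow_left₀ (log_nonneg hx) (log_le_rpow_div (by linarith) hε) m
    _ = (2 * m + 2) ^ m * x ^ (ε * m) := by
        rw [div_pow, rpow_mul (by linarith), rpow_natCast, div_eq_mul_inv, inv_pow, inv_inv,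
          mul_comm]
    _ ≤ (2 * m + 2) ^ m * √x := by
        rw [sqrt_eq_rpow]
        gcongr

lemma sum_primesLE_two_mul_log_div_le {N : ℕ} (hN : N ≠ 0) :
    ∑ p ∈ Nat.primesLE (2 * N), log p / p ≤ ∑ p ∈ Nat.primesLE N, log p / p + 2 * log 4 := by
  have hlow : {p ∈ Nat.primesLE (2 * N) | p ≤ N} = Nat.primesLE N := by
    ext p
    simp only [mem_filter, Nat.mem_primesLE]
    grind
  rw [← sum_filter_add_sum_filter_not _ (· ≤ N), hlow, add_le_add_iff_left]
  have hNpos : (0 : ℝ) < N := by positivity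
  calc ∑ p ∈ Nat.primesLE (2 * N) with ¬p ≤ N, log p / p
      ≤ ∑ p ∈ Nat.primesLE (2 * N) with ¬p ≤ N, log p / N := by
        refine sum_le_sum fun p hp ↦ ?_
        rw [mem_filter, not_le] at hp
        exact div_le_div_of_nonneg_left (log_natCast_nonneg p) hNpos (by exact_mod_cast hp.2.le)
    _ ≤ ∑ p ∈ Nat.primesLE (2 * N), log p / N :=
        sum_le_sum_of_subset_of_nonneg (filter_subset _ _) fun p _ _ ↦
          div_nonneg (log_natCast_nonneg p) hNpos.le
    _ = Chebyshev.theta (2 * N : ℕ) / N := by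
        rw [← sum_div, Chebyshev.theta_eq_sum_primesLE_log]
    _ ≤ log 4 * (2 * N : ℕ) / N := by gcongr; exact Chebyshev.theta_le_log4_mul_x (by positivity)
    _ = 2 * log 4 := by push_cast; field_simp

lemma sum_primesLE_two_pow_log_div_le (k : ℕ) :
    ∑ p ∈ Nat.primesLE (2 ^ k), log p / p ≤ 2 * log 4 * k := by
  induction k with
  | zero => simp [show Nat.primesLE 1 = ∅ by decide]
  | succ k ih =>
    rw [pow_succ', Nat.cast_succ]
    linarith [sum_primesLE_two_mul_log_div_le (pow_ne_zero k two_ne_zero)]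

lemma sum_log_pow_succ_div_le_of_subset_primesLE (s k : ℕ) {A : Finset ℕ}
    (hA : A ⊆ Nat.primesLE (2 ^ k)) :
    ∑ p ∈ A, log p ^ (s + 1) / p ≤ 2 * log 4 * k ^ (s + 1) := by
  have hlog : ∀ p ∈ A, log p ≤ k := fun p hp ↦
    calc log p ≤ log (2 ^ k : ℕ) :=
          log_le_log (by exact_mod_cast (Nat.mem_primesLE.mp (hA hp)).2.pos)
            (by exact_mod_cast (Nat.mem_primesLE.mp (hA hp)).1)
      _ = k * log 2 := by push_cast; rw [log_pow]
      _ ≤ k := mul_le_of_le_one_right k.cast_nonneg (by linarith [log_two_lt_d9])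
  calc ∑ p ∈ A, log p ^ (s + 1) / p
      ≤ ∑ p ∈ A, (k : ℝ) ^ s * (log p / p) := by
        refine sum_le_sum fun p hp ↦ ?_
        rw [pow_succ, mul_div_assoc]
        gcongr
        exact hlog p hp
    _ ≤ (k : ℝ) ^ s * ∑ p ∈ Nat.primesLE (2 ^ k), log p / p := by
        rw [← mul_sum]
        gcongr
    _ ≤ (k : ℝ) ^ s * (2 * log 4 * k) := by gcongr; exact sum_primesLE_two_pow_log_div_le k
    _ = 2 * log 4 * k ^ (s + 1) := by ring

lemma log_pow_succ_div_le {s : ℕ} {x T : ℝ} (hT : 1 ≤ T) (hx : T ^ 2 ≤ x) :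
    log x ^ (s + 1) / x ≤ (2 * s + 2) ^ s / T * log x := by
  have hx1 : 1 ≤ x := by nlinarith
  have hTx : T ≤ √x := le_sqrt_of_sq_le hx
  have hsqrt : 0 < √x := by linarith
  calc log x ^ (s + 1) / x = log x ^ s / (√x * √x) * log x := by
        rw [mul_self_sqrt (by positivity), pow_succ, mul_div_right_comm]
    _ ≤ (2 * s + 2) ^ s * √x / (√x * √x) * log x := by
        gcongr
        · exact log_nonneg hx1
        · exact log_pow_le_mul_sqrt s hx1
    _ ≤ (2 * s + 2) ^ s / T * log x := by
        rw [mul_div_mul_right _ _ hsqrt.ne']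
        gcongr
        exact log_nonneg hx1

lemma sum_primeFactors_log_le (N : ℕ) : ∑ p ∈ N.primeFactors, log p ≤ log N := by
  rcases eq_or_ne N 0 with rfl | hN
  · simp
  rw [← log_prod fun p hp ↦ by exact_mod_cast (Nat.prime_of_mem_primeFactors hp).ne_zero,
    ← Nat.cast_prod]
  exact log_le_log (by exact_mod_cast prod_pos fun p hp ↦ (Nat.prime_of_mem_primeFactors hp).pos)
    (by exact_mod_cast Nat.le_of_dvd (Nat.pos_of_ne_zero hN) (Nat.prod_primeFactors_dvd N))

lemma sum_primeFactors_log_pow_succ_div_le (N s j : ℕ) :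
    ∑ p ∈ N.primeFactors, log p ^ (s + 1) / p
      ≤ 2 * log 4 * (2 * j : ℕ) ^ (s + 1) + (2 * s + 2) ^ s * log N / 2 ^ j := by
  rw [← sum_filter_add_sum_filter_not _ (· ≤ 2 ^ (2 * j))]
  gcongr
  · refine sum_log_pow_succ_div_le_of_subset_primesLE s (2 * j) fun p hp ↦ ?_
    rw [mem_filter] at hp
    exact Nat.mem_primesLE.mpr ⟨hp.2, Nat.prime_of_mem_primeFactors hp.1⟩
  · calc ∑ p ∈ N.primeFactors with ¬p ≤ 2 ^ (2 * j), log p ^ (s + 1) / p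
        ≤ ∑ p ∈ N.primeFactors with ¬p ≤ 2 ^ (2 * j), (2 * s + 2) ^ s / 2 ^ j * log p := by
          refine sum_le_sum fun p hp ↦ log_pow_succ_div_le (one_le_pow₀ one_le_two) ?_
          rw [mem_filter, not_le] at hp
          rw [← pow_mul, mul_comm]
          exact_mod_cast hp.2.le
      _ ≤ (2 * s + 2) ^ s / 2 ^ j * ∑ p ∈ N.primeFactors, log p := by
          rw [← mul_sum]
          gcongr
          exact filter_subset _ _
      _ ≤ (2 * s + 2) ^ s * log N / 2 ^ j := by
          rw [div_mul_eq_mul_div, mul_div_right_comm, mul_div_right_comm _ (log N)]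
          gcongr
          exact sum_primeFactors_log_le N

lemma Nat.Prime.dvd_pow_orderOf_sub_one {p a : ℕ} (hp : p.Prime) (ha : p.Coprime a) :
    p ∣ a ^ orderOf (a : ZMod p) - 1 := by
  have ha0 : a ≠ 0 := by
    rintro rfl
    exact hp.ne_one (Nat.coprime_zero_right p |>.mp ha)
  rw [← ZMod.natCast_eq_zero_iff, Nat.cast_sub (Nat.one_le_pow _ _ (Nat.pos_of_ne_zero ha0)),
    Nat.cast_pow, pow_orderOf_eq_one, Nat.cast_one, sub_self]

lemma tsum_orderOf_eq_sum_primeFactors {M : Type*} [AddCommMonoid M] [TopologicalSpace M]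
    {a n N : ℕ} (hN : N ≠ 0) (hdvd : a ^ n - 1 ∣ N) (f : ℕ → M) :
    ∑' p : {p : ℕ // p.Prime ∧ p.Coprime a ∧ orderOf (a : ZMod p) = n}, f p
      = ∑ p ∈ N.primeFactors with p.Coprime a ∧ orderOf (a : ZMod p) = n, f p := by
  have hmem : ∀ p, p.Prime ∧ p.Coprime a ∧ orderOf (a : ZMod p) = n ↔
      p ∈ {p ∈ N.primeFactors | p.Coprime a ∧ orderOf (a : ZMod p) = n} := by
    intro p
    rw [mem_filter, Nat.mem_primeFactors]
    constructor
    · rintro ⟨hp, hpa, rfl⟩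
      exact ⟨⟨hp, (hp.dvd_pow_orderOf_sub_one hpa).trans hdvd, hN⟩, hpa, rfl⟩
    · rintro ⟨⟨hp, -⟩, h⟩
      exact ⟨hp, h⟩
  rw [← Finset.tsum_subtype]
  exact (Equiv.subtypeEquivRight hmem).tsum_eq fun p ↦ f p

lemma prod_pow_sub_one_ne_zero {a : ℕ} (ha : 1 < a) (m : ℕ) :
    ∏ n ∈ Icc 1 m, (a ^ n - 1) ≠ 0 :=
  prod_ne_zero_iff.mpr fun n hn ↦ Nat.sub_ne_zero_of_lt (Nat.one_lt_pow (by grind) ha)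

lemma sum_tsum_orderOf_le_sum_primeFactors {a : ℕ} (ha : 1 < a) (m : ℕ) {f : ℕ → ℝ}
    (hf : ∀ p, 0 ≤ f p) :
    ∑ n ∈ Icc 1 m, ∑' p : {p : ℕ // p.Prime ∧ p.Coprime a ∧ orderOf (a : ZMod p) = n}, f p
      ≤ ∑ p ∈ (∏ n ∈ Icc 1 m, (a ^ n - 1)).primeFactors, f p := by
  set P := ∏ n ∈ Icc 1 m, (a ^ n - 1)
  have hP : P ≠ 0 := prod_pow_sub_one_ne_zero ha m
  calc ∑ n ∈ Icc 1 m, ∑' p : {p : ℕ // p.Prime ∧ p.Coprime a ∧ orderOf (a : ZMod p) = n}, f p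
      = ∑ n ∈ Icc 1 m, ∑ p ∈ {p ∈ P.primeFactors | p.Coprime a} with orderOf (a : ZMod p) = n,
          f p := by
        refine sum_congr rfl fun n hn ↦ ?_
        rw [tsum_orderOf_eq_sum_primeFactors hP (dvd_prod_of_mem _ hn), filter_filter]
    _ ≤ ∑ p ∈ P.primeFactors with p.Coprime a, f p :=
        sum_fiberwise_le_sum_of_sum_fiber_nonneg fun _ _ ↦ sum_nonneg fun p _ ↦ hf p
    _ ≤ ∑ p ∈ P.primeFactors, f p :=
        sum_le_sum_of_subset_of_nonneg (filter_subset _ _) fun p _ _ ↦ hf p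

lemma log_prod_pow_sub_one_le {a : ℕ} (ha : 1 < a) (m : ℕ) :
    log (∏ n ∈ Icc 1 m, (a ^ n - 1) : ℕ) ≤ m ^ 2 * log a := by
  have hle : ∏ n ∈ Icc 1 m, (a ^ n - 1) ≤ (a ^ m) ^ #(Icc 1 m) :=
    prod_le_pow_card _ _ _ fun n hn ↦
      (Nat.sub_le _ _).trans (Nat.pow_le_pow_right (by omega) (mem_Icc.mp hn).2)
  rw [Nat.card_Icc, add_tsub_cancel_right] at hle
  calc log (∏ n ∈ Icc 1 m, (a ^ n - 1) : ℕ) ≤ log ((a ^ m) ^ m : ℕ) :=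
        log_le_log (by exact_mod_cast Nat.pos_of_ne_zero (prod_pow_sub_one_ne_zero ha m))
          (by exact_mod_cast hle)
    _ = m ^ 2 * log a := by push_cast; rw [log_pow, log_pow]; ring

lemma exists_le_two_pow_of_ne_zero {m : ℕ} (hm : m ≠ 0) :
    ∃ j : ℕ, m ≤ 2 ^ j ∧ (j : ℝ) ≤ 3 * log (m + 1) := by
  refine ⟨Nat.log 2 m + 1, (Nat.lt_pow_succ_log_self one_lt_two m).le, ?_⟩
  have hm1 : (1 : ℝ) ≤ m := by exact_mod_cast Nat.one_le_iff_ne_zero.mpr hm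
  have hlog : (Nat.log 2 m : ℝ) * log 2 ≤ log (m + 1) := by
    rw [← log_pow]
    exact log_le_log (by positivity)
      (by exact_mod_cast (Nat.pow_log_le_self 2 hm).trans (Nat.le_succ m))
  have hlog2 : log 2 ≤ log (m + 1) := log_le_log two_pos (by linarith)
  push_cast
  nlinarith [log_two_gt_d9]

theorem stmt_19 (a s : ℕ) (ha : 1 < a) (hs : 1 ≤ s) :
    ∃ C : ℝ, 0 < C ∧ ∀ z : ℝ, 1 ≤ z →
      ∑ n ∈ Finset.Icc 1 ⌊z⌋₊,
        (∑' p : {p : ℕ // p.Prime ∧ Nat.Coprime p a ∧ orderOf ((a : ZMod p)) = n},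
          (Real.log (p : ℕ)) ^ s / ((p : ℕ) : ℝ))
        ≤ C * (Real.log (z + 2)) ^ s := by
  obtain ⟨s, rfl⟩ : ∃ t, s = t + 1 := ⟨s - 1, by omega⟩
  refine ⟨2 * log 4 * 12 ^ (s + 1) + (2 * s + 2) ^ s * log a, by positivity, fun z hz ↦ ?_⟩
  set m := ⌊z⌋₊
  set P := ∏ n ∈ Icc 1 m, (a ^ n - 1)
  have hmz : (m : ℝ) ≤ z := Nat.floor_le (by linarith)
  obtain ⟨j, hmj, hj⟩ := exists_le_two_pow_of_ne_zero (Nat.floor_pos.mpr hz).ne'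
  have hlogz : 1 ≤ log (z + 2) := by
    rw [le_log_iff_exp_le (by linarith)]
    linarith [exp_one_lt_d9]
  have hjz : ((2 * (2 * j) : ℕ) : ℝ) ≤ 12 * log (z + 2) := by
    have : log (m + 1) ≤ log (z + 2) := log_le_log (by positivity) (by linarith)
    push_cast
    linarith
  have hP : log P ≤ log a * 2 ^ (2 * j) :=
    calc log P ≤ m ^ 2 * log a := log_prod_pow_sub_one_le ha m
      _ ≤ (2 ^ j) ^ 2 * log a := by gcongr; exact_mod_cast hmj
      _ = log a * 2 ^ (2 * j) := by rw [← pow_mul, mul_comm, mul_comm j]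
  calc ∑ n ∈ Icc 1 m, ∑' p : {p : ℕ // p.Prime ∧ p.Coprime a ∧ orderOf (a : ZMod p) = n},
        log p ^ (s + 1) / p
      ≤ ∑ p ∈ P.primeFactors, log p ^ (s + 1) / p :=
        sum_tsum_orderOf_le_sum_primeFactors ha m (f := fun p ↦ log p ^ (s + 1) / p)
          fun p ↦ by positivity
    _ ≤ 2 * log 4 * (2 * (2 * j) : ℕ) ^ (s + 1) + (2 * s + 2) ^ s * log P / 2 ^ (2 * j) :=
        sum_primeFactors_log_pow_succ_div_le P s (2 * j)
    _ ≤ 2 * log 4 * (12 * log (z + 2)) ^ (s + 1) + (2 * s + 2) ^ s * log a := by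
        gcongr
        rw [div_le_iff₀ (by positivity), mul_assoc]
        gcongr
    _ ≤ (2 * log 4 * 12 ^ (s + 1) + (2 * s + 2) ^ s * log a) * log (z + 2) ^ (s + 1) := by
        rw [mul_pow, add_mul, ← mul_assoc]
        gcongr 2 * log 4 * 12 ^ (s + 1) * log (z + 2) ^ (s + 1) + ?_
        exact le_mul_of_one_le_right (by positivity) (one_le_pow₀ hlogz)
end
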